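/- In a recollement situation, if A is an object of A with i*A = 0, then the counit ε_A: j_!j*A → A is an epimorphism and its kernel lies in the essential image of i_*. If moreover A has enough projectives, there is a short exact sequence 0 → i_*(L_1 i*)A → j_!j*A → A → 0. -/

import Mathlib

open CategoryTheory Limits

universe v u v' u' v'' u''

/-- A recollement situation of abelian categories `A'`, `A`, `A''`. -/
structure Recollement (A' : Type u') (A : Type u) (A'' : Type u'')
    [Category.{v'} A'] [Category.{v} A] [Category.{v''} A'']
    [Abelian A'] [Abelian A] [Abelian A''] where
  /-- the functor `i^* : A → A'` -/
  iStar : A ⥤ A'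
  /-- the functor `i_* : A' → A` -/
  iLower : A' ⥤ A
  /-- the functor `i^! : A → A'` -/
  iShriek : A ⥤ A'
  /-- the functor `j_! : A'' → A` -/
  jShriek : A'' ⥤ A
  /-- the functor `j^* : A → A''` -/
  jStar : A ⥤ A''
  /-- the functor `j_* : A'' → A` -/
  jLower : A'' ⥤ A
  iStar_additive : iStar.Additive
  iLower_additive : iLower.Additive
  iShriek_additive : iShriek.Additive
  jShriek_additive : jShriek.Additive
  jStar_additive : jStar.Additive
  jLower_additive : jLower.Additive
  /-- `j_!` is left adjoint to `j^*` -/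
  adj₁ : jShriek ⊣ jStar
  /-- `j^*` is left adjoint to `j_*` -/
  adj₂ : jStar ⊣ jLower
  /-- `i^*` is left adjoint to `i_*` -/
  adj₃ : iStar ⊣ iLower
  /-- `i_*` is left adjoint to `i^!` -/
  adj₄ : iLower ⊣ iShriek
  /-- the unit `Id → j^* j_!` is an isomorphism -/
  isIso_adj₁_unit : IsIso adj₁.unit
  /-- the counit `j^* j_* → Id` is an isomorphism -/
  isIso_adj₂_counit : IsIso adj₂.counit
  /-- the counit `i^* i_* → Id` is an isomorphism -/
  isIso_adj₃_counit : IsIso adj₃.counit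
  /-- the unit `Id → i^! i_*` is an isomorphism -/
  isIso_adj₄_unit : IsIso adj₄.unit
  iLower_full : iLower.Full
  iLower_faithful : iLower.Faithful
  /-- `i_*` is an embedding onto the full subcategory of objects killed by `j^*` -/
  essImage_iLower : ∀ (X : A), iLower.essImage X ↔ IsZero (jStar.obj X)

attribute [instance] Recollement.iStar_additive Recollement.iLower_additive
  Recollement.iShriek_additive Recollement.jShriek_additive Recollement.jStar_additive
  Recollement.jLower_additive Recollement.isIso_adj₁_unit Recollement.isIso_adj₂_counit
  Recollement.isIso_adj₃_counit Recollement.isIso_adj₄_unit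
  Recollement.iLower_full Recollement.iLower_faithful

variable {A' : Type u'} {A : Type u} {A'' : Type u''}
    [Category.{v'} A'] [Category.{v} A] [Category.{v''} A'']
    [Abelian A'] [Abelian A] [Abelian A'']

namespace Recollement

/-- The norm `N : j_! ⟶ j_*`, whose component at `X` corresponds to the identity of `X`
under `Hom(j_!X, j_*X) ≅ Hom(X, j^*j_*X) ≅ Hom(X, X)`. -/
noncomputable def norm (R : Recollement A' A A'') : R.jShriek ⟶ R.jLower where
  app X := (R.adj₁.homEquiv X (R.jLower.obj X)).symm (inv (R.adj₂.counit.app X))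
  naturality {X Y} f := by
    have h : f ≫ inv (R.adj₂.counit.app Y) =
        inv (R.adj₂.counit.app X) ≫ R.jStar.map (R.jLower.map f) := by
      rw [← cancel_mono (R.adj₂.counit.app Y)]
      have := R.adj₂.counit.naturality f
      simp only [Functor.comp_map, Functor.id_map] at this
      simp [this]
    rw [← Adjunction.homEquiv_naturality_left_symm, h,
      Adjunction.homEquiv_naturality_right_symm]

/-- The intermediate extension `j_!* := Im (N : j_! → j_*)`. -/
noncomputable def jMid (R : Recollement A' A A'') : A'' ⥤ A where
  obj X := image (R.norm.app X)
  map {X Y} f := image.map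
    ((Arrow.homMk _ _ (R.norm.naturality f) :
      Arrow.mk (R.norm.app X) ⟶ Arrow.mk (R.norm.app Y)))
  map_id X := by
    have : (Arrow.homMk _ _ (R.norm.naturality (𝟙 X)) :
        Arrow.mk (R.norm.app X) ⟶ Arrow.mk (R.norm.app X)) = 𝟙 (Arrow.mk (R.norm.app X)) := by
      ext <;> simp
    rw [this, image.map_id]
    rfl
  map_comp {X Y Z} f g := by
    rw [← image.map_comp]
    congr 1
    ext <;> simp

end Recollement

/-! Since `i^*` is right exact and kills `j_!`, it identifies `i^*U` with `i^*(coker ε_U)`, and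
`coker ε_U` lies in the image of `i_*`, so `coker ε_U ≅ i_*i^*U`. Hence `i^*X = 0` forces `ε_X` to
be epi, and its kernel `K` is killed by `j^*`, so it lies in the image of `i_*`.

For `L_1 i^*`, pick an epimorphism `π : P ⟶ X` from a projective and form the pullback
`N = P ×_X j_!j^*X`. The snake lemma applied to the counits shows that `i^*` keeps
`0 → ker π → N → j_!j^*X → 0` left exact, and right exactness gives `i^*(ker π) ≅ i^*N`.
As `P` is projective, `N ⟶ P` is a split epimorphism with kernel `K`, so
`L_1 i^*X = ker (i^*(ker π) ⟶ i^*P) ≅ i^*K`, and `i_*L_1 i^*X ≅ i_*i^*K ≅ K`.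
-/

namespace CategoryTheory

open Category

variable {C : Type*} [Category C] [Abelian C] {D : Type*} [Category D] [Abelian D]

/-- The segment `ker τ₃ ⟶ coker τ₁ ⟶ coker τ₂` of the snake lemma, when `ker τ₃ = 0`. -/
lemma Abelian.mono_cokernel_map_of_exact {S₁ S₂ : ShortComplex C} (φ : S₁ ⟶ S₂)
    (h₁ : S₁.Exact) (hf₂ : Mono S₂.f) (h₃ : Mono φ.τ₃) :
    Mono (cokernel.map φ.τ₁ φ.τ₂ S₁.f S₂.f φ.comm₁₂) := by
  refine Preadditive.mono_of_cancel_zero _ fun {T} a ha => ?_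
  have hπ : cokernel.π φ.τ₁ ≫ cokernel.map φ.τ₁ φ.τ₂ S₁.f S₂.f φ.comm₁₂ =
      S₂.f ≫ cokernel.π φ.τ₂ := cokernel.π_desc _ _ _
  obtain ⟨T₁, π₁, _, x, hx⟩ := surjective_up_to_refinements_of_epi (cokernel.π φ.τ₁) a
  obtain ⟨T₂, π₂, _, y, hy⟩ := (ShortComplex.exact_cokernel φ.τ₂).exact_up_to_refinements
    (x ≫ S₂.f) (by rw [assoc, ← hπ, ← reassoc_of% hx, ha, comp_zero])
  dsimp only at y hy
  have hyg : y ≫ S₁.g = 0 := by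
    rw [← cancel_mono φ.τ₃, assoc, ← φ.comm₂₃, ← reassoc_of% hy, S₂.zero, comp_zero, comp_zero,
      zero_comp]
  obtain ⟨T₃, π₃, _, w, hw⟩ := h₁.exact_up_to_refinements y hyg
  have hwx : w ≫ φ.τ₁ = π₃ ≫ π₂ ≫ x := by
    rw [← cancel_mono S₂.f, assoc, φ.comm₁₂, ← reassoc_of% hw, ← hy, assoc, assoc]
  rw [← cancel_epi (π₃ ≫ π₂ ≫ π₁), comp_zero, assoc, assoc, hx, ← assoc π₂, ← assoc π₃, ← hwx,
    assoc, cokernel.condition, comp_zero]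

noncomputable def Functor.kernelMapIsoOfProjective (F : C ⥤ D) [F.Additive] {N P : C}
    (p : N ⟶ P) [Epi p] [Projective P] : Limits.kernel (F.map p) ≅ F.obj (Limits.kernel p) :=
  IsLimit.conePointUniqueUpToIso (kernelIsKernel (F.map p))
    ((ShortComplex.ShortExact.mk' (ShortComplex.exact_kernel p) inferInstance inferInstance
      ).splittingOfProjective.map F).fIsKernel

lemma ShortComplex.shortExact_of_iso_kernel {X Y K : C} (g : X ⟶ Y) [Epi g] (e : K ≅ kernel g) :
    (ShortComplex.mk (e.hom ≫ kernel.ι g) g (by simp)).ShortExact :=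
  shortExact_of_iso (S₁ := ShortComplex.mk _ _ (kernel.condition g))
    (isoMk e.symm (Iso.refl _) (Iso.refl _) (by simp))
    (ShortExact.mk' (exact_kernel g) inferInstance inferInstance)

namespace ShortComplex

variable {S : ShortComplex C} {K : C} (e : S.X₂ ⟶ K) (ι : K ⟶ S.X₃)
  (fac : e ≫ ι = S.g) [Mono ι] (F : C ⥤ D) [F.Additive] [PreservesFiniteColimits F]

include fac in
lemma f_comp_eq_zero_of_fac : S.f ≫ e = 0 := by
  rw [← cancel_mono ι, assoc, fac, S.zero, zero_comp]

namespace Exact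

variable (hS : S.Exact)

include hS in
lemma exact_of_g_fac : (ShortComplex.mk S.f e (f_comp_eq_zero_of_fac e ι fac)).Exact :=
  (exact_iff_of_epi_of_isIso_of_mono (S₁ := ShortComplex.mk S.f e _) (S₂ := S)
    { τ₁ := 𝟙 _, τ₂ := 𝟙 _, τ₃ := ι, comm₂₃ := by simp [fac] }).2 hS

variable [Epi e]

noncomputable def isColimitMapOfFac :
    IsColimit (CokernelCofork.ofπ (F.map e) (show F.map S.f ≫ F.map e = 0 by
      rw [← F.map_comp, f_comp_eq_zero_of_fac e ι fac, F.map_zero])) :=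
  CokernelCofork.mapIsColimit _ (hS.exact_of_g_fac e ι fac).gIsCokernel F

lemma isColimitMapOfFac_desc :
    (hS.isColimitMapOfFac e ι fac F).desc (CokernelCofork.ofπ (F.map S.g)
      (by rw [← F.map_comp, S.zero, F.map_zero])) = F.map ι :=
  Cofork.IsColimit.hom_ext (hS.isColimitMapOfFac e ι fac F) (by
    rw [Cofork.IsColimit.π_desc]
    exact (congrArg F.map fac).symm.trans (F.map_comp e ι))

noncomputable def rightHomologyDataMapOfFac : (S.map F).RightHomologyData where
  Q := F.obj K
  H := kernel ((hS.isColimitMapOfFac e ι fac F).desc (CokernelCofork.ofπ _ (S.map F).zero))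
  p := F.map e
  ι := kernel.ι _
  wp := _
  hp := hS.isColimitMapOfFac e ι fac F
  wι := kernel.condition _
  hι := kernelIsKernel _

noncomputable def mapHomologyIsoKernelOfFac : (S.map F).homology ≅ kernel (F.map ι) :=
  (hS.rightHomologyDataMapOfFac e ι fac F).homologyIso ≪≫
    kernelIsoOfEq (hS.isColimitMapOfFac_desc e ι fac F)

end Exact

end ShortComplex

namespace ProjectiveResolution

variable {X : C} (P : ProjectiveResolution X)

instance epi_kernelLift_d :
    Epi (kernel.lift (P.π.f 0) (P.complex.d 1 0) P.complex_d_comp_π_f_zero) :=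
  (ShortComplex.exact_iff_epi_kernel_lift _).1 P.exact₀

noncomputable def leftDerivedOneIsoKernel [HasProjectiveResolutions C] (F : C ⥤ D) [F.Additive]
    [PreservesFiniteColimits F] :
    (F.leftDerived 1).obj X ≅ kernel (F.map (kernel.ι (P.π.f 0))) :=
  P.isoLeftDerivedObj F 1 ≪≫
    HomologicalComplex.homologyIsoSc' ((F.mapHomologicalComplex _).obj P.complex) 2 1 0
      (by simp) (by simp) ≪≫
    (P.exact_succ 0).mapHomologyIsoKernelOfFac
      (kernel.lift (P.π.f 0) (P.complex.d 1 0) P.complex_d_comp_π_f_zero) _ (kernel.lift_ι _ _ _) F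

end ProjectiveResolution

end CategoryTheory

namespace Recollement

variable (R : Recollement A' A A'')

instance : R.iStar.IsLeftAdjoint := R.adj₃.isLeftAdjoint
instance : R.jStar.IsLeftAdjoint := R.adj₂.isLeftAdjoint
instance : R.jStar.IsRightAdjoint := R.adj₁.isRightAdjoint
instance : R.jShriek.IsLeftAdjoint := R.adj₁.isLeftAdjoint
instance : R.jShriek.Full := R.adj₁.fullyFaithfulLOfIsIsoUnit.full
instance : R.jShriek.Faithful := R.adj₁.fullyFaithfulLOfIsIsoUnit.faithful

lemma isZero_jStar_obj_iLower_obj (W : A') : IsZero (R.jStar.obj (R.iLower.obj W)) :=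
  (R.essImage_iLower _).1 (R.iLower.obj_mem_essImage W)

lemma isZero_iStar_obj_jShriek_obj (Y : A'') : IsZero (R.iStar.obj (R.jShriek.obj Y)) := by
  rw [IsZero.iff_id_eq_zero]
  apply (R.adj₃.homEquiv _ _).injective
  apply (R.adj₁.homEquiv _ _).injective
  exact (R.isZero_jStar_obj_iLower_obj _).eq_of_tgt _ _

lemma essImage_kernel_counit (X : A) : R.iLower.essImage (kernel (R.adj₁.counit.app X)) :=
  (R.essImage_iLower _).2 ((isZero_zero _).of_iso
    (PreservesKernel.iso R.jStar _ ≪≫ kernel.ofMono _))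

lemma essImage_cokernel_counit (X : A) : R.iLower.essImage (cokernel (R.adj₁.counit.app X)) :=
  (R.essImage_iLower _).2 ((isZero_zero _).of_iso
    (PreservesCokernel.iso R.jStar _ ≪≫ cokernel.ofEpi _))

instance isIso_iStar_map_cokernel_π_counit (X : A) :
    IsIso (R.iStar.map (cokernel.π (R.adj₁.counit.app X))) :=
  have hS := (ShortComplex.exact_cokernel (R.adj₁.counit.app X)).map_of_epi_of_preservesCokernel
    R.iStar inferInstance inferInstance
  have : Mono (R.iStar.map (cokernel.π (R.adj₁.counit.app X))) :=
    hS.mono_g ((R.isZero_iStar_obj_jShriek_obj _).eq_of_src _ _)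
  isIso_of_mono_of_epi _

noncomputable def cokernelCounitIso (X : A) :
    cokernel (R.adj₁.counit.app X) ≅ R.iLower.obj (R.iStar.obj X) :=
  have := R.adj₃.isIso_unit_app_iff_mem_essImage.2 (R.essImage_cokernel_counit X)
  asIso (R.adj₃.unit.app (cokernel (R.adj₁.counit.app X))) ≪≫
    R.iLower.mapIso (asIso (R.iStar.map (cokernel.π _))).symm

lemma epi_counit_app_of_isZero {X : A} (hX : IsZero (R.iStar.obj X)) :
    Epi (R.adj₁.counit.app X) :=
  Preadditive.epi_of_isZero_cokernel _ ((R.iLower.map_isZero hX).of_iso (R.cokernelCounitIso X))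

lemma mono_iStar_map_of_essImage {Y₁ Y₂ : A} {m : Y₁ ⟶ Y₂} (hm : Mono m)
    (h₁ : R.iLower.essImage Y₁) (h₂ : R.iLower.essImage Y₂) : Mono (R.iStar.map m) := by
  have := R.adj₃.isIso_unit_app_iff_mem_essImage.2 h₁
  have := R.adj₃.isIso_unit_app_iff_mem_essImage.2 h₂
  have hmap : R.iLower.map (R.iStar.map m) =
      inv (R.adj₃.unit.app Y₁) ≫ m ≫ R.adj₃.unit.app Y₂ := by
    rw [IsIso.eq_inv_comp]
    exact (R.adj₃.unit.naturality m).symm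
  have : Mono (R.iLower.map (R.iStar.map m)) := by
    rw [hmap]
    infer_instance
  exact R.iLower.mono_of_mono_map this

lemma mono_iStar_map_f_of_shortExact {S : ShortComplex A} (hS : S.ShortExact)
    (h₃ : IsIso (R.adj₁.counit.app S.X₃)) : Mono (R.iStar.map S.f) := by
  let c := cokernel.map (R.adj₁.counit.app S.X₁) (R.adj₁.counit.app S.X₂) _ S.f
    (R.adj₁.counit.naturality S.f).symm
  have hc : Mono c := Abelian.mono_cokernel_map_of_exact (S₂ := S)
    { τ₁ := R.adj₁.counit.app S.X₁, τ₂ := R.adj₁.counit.app S.X₂, τ₃ := R.adj₁.counit.app S.X₃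
      comm₁₂ := (R.adj₁.counit.naturality S.f).symm
      comm₂₃ := (R.adj₁.counit.naturality S.g).symm }
    (hS.exact.map_of_epi_of_preservesCokernel (R.jStar ⋙ R.jShriek) hS.epi_g inferInstance)
    hS.mono_f (inferInstanceAs (Mono (R.adj₁.counit.app S.X₃)))
  have := R.mono_iStar_map_of_essImage hc (R.essImage_cokernel_counit S.X₁)
    (R.essImage_cokernel_counit S.X₂)
  have hfac : R.iStar.map S.f ≫ R.iStar.map (cokernel.π (R.adj₁.counit.app S.X₂)) =
      R.iStar.map (cokernel.π (R.adj₁.counit.app S.X₁)) ≫ R.iStar.map c := by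
    rw [← Functor.map_comp, ← Functor.map_comp, cokernel.π_desc]
  exact mono_of_mono_fac hfac

lemma isIso_iStar_map_f_of_shortExact {S : ShortComplex A} (hS : S.ShortExact)
    (h₃ : IsIso (R.adj₁.counit.app S.X₃)) : IsIso (R.iStar.map S.f) :=
  have := R.mono_iStar_map_f_of_shortExact hS h₃
  have hX₃ : IsZero (R.iStar.obj S.X₃) := (R.isZero_iStar_obj_jShriek_obj _).of_iso
    (R.iStar.mapIso (asIso (R.adj₁.counit.app S.X₃)).symm)
  have : Epi (R.iStar.map S.f) :=
    (hS.exact.map_of_epi_of_preservesCokernel R.iStar hS.epi_g inferInstance).epi_f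
    (hX₃.eq_of_tgt _ _)
  isIso_of_mono_of_epi _

noncomputable def kernelIStarMapKernelιIso {X P : A} (hX : IsZero (R.iStar.obj X)) [Projective P]
    (π : P ⟶ X) [Epi π] :
    kernel (R.iStar.map (kernel.ι π)) ≅ R.iStar.obj (kernel (R.adj₁.counit.app X)) :=
  have := R.epi_counit_app_of_isZero hX
  have sq := IsPullback.of_hasPullback π (R.adj₁.counit.app X)
  have := isIso_kernel_map_of_isPullback sq
  have := isIso_kernel_map_of_isPullback sq.flip
  have := R.isIso_iStar_map_f_of_shortExact
    (ShortComplex.ShortExact.mk' (ShortComplex.exact_kernel (pullback.snd π (R.adj₁.counit.app X)))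
      inferInstance inferInstance)
    (inferInstanceAs (IsIso (R.adj₁.counit.app (R.jShriek.obj _))))
  (kernelIsIsoComp (R.iStar.map (kernel.map _ _ _ _ sq.flip.w)) _).symm ≪≫
    kernelIsoOfEq (by rw [← Functor.map_comp, ← Functor.map_comp, kernel.lift_ι]) ≪≫
    kernelIsIsoComp (R.iStar.map (kernel.ι (pullback.snd _ _))) _ ≪≫
    R.iStar.kernelMapIsoOfProjective (pullback.fst π (R.adj₁.counit.app X)) ≪≫
    R.iStar.mapIso (asIso (kernel.map _ _ _ _ sq.w))

end Recollement

/-- If `i^*A = 0` then the counit `ε_A : j_!j^*A → A` is epi with kernel in the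
essential image of `i_*`; with enough projectives there is a short exact sequence
`0 → i_*(L_1 i^*)A → j_!j^*A → A → 0`. -/
theorem recollement_counit_epi_of_iStar_isZero (R : Recollement A' A A'')
    (X : A) (hX : IsZero (R.iStar.obj X)) :
    Epi (R.adj₁.counit.app X) ∧
    R.iLower.essImage (kernel (R.adj₁.counit.app X)) ∧
    (∀ [EnoughProjectives A],
      ∃ (ι : R.iLower.obj ((R.iStar.leftDerived 1).obj X) ⟶ R.jShriek.obj (R.jStar.obj X))
        (w : ι ≫ R.adj₁.counit.app X = 0),
        (ShortComplex.mk _ _ w).ShortExact) := by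
  have := R.epi_counit_app_of_isZero hX
  refine ⟨this, R.essImage_kernel_counit X, fun {_} => ?_⟩
  obtain ⟨P⟩ := HasProjectiveResolution.out (Z := X)
  -- `P.π.f 0` lands in `((ChainComplex.single₀ A).obj X).X 0`, which is `X` only after unfolding.
  have : @Epi _ _ (P.complex.X 0) X (P.π.f 0) := inferInstanceAs (Epi (P.π.f 0))
  have := R.adj₃.isIso_unit_app_iff_mem_essImage.2 (R.essImage_kernel_counit X)
  let Φ : R.iLower.obj ((R.iStar.leftDerived 1).obj X) ≅ kernel (R.adj₁.counit.app X) :=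
    R.iLower.mapIso (P.leftDerivedOneIsoKernel R.iStar ≪≫
      R.kernelIStarMapKernelιIso hX (P.π.f 0 : P.complex.X 0 ⟶ X)) ≪≫
      (asIso (R.adj₃.unit.app _)).symm
  exact ⟨_, _, ShortComplex.shortExact_of_iso_kernel _ Φ⟩
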